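/- Suppose there is no bias and the latent-quality distribution is group-independent: β_A = β_B = 0, μ_A = μ_B, η_A = η_B = η > 0, and σ_A > σ_B > 0 (so that σ̂_A > σ̂_B and σ̃_A < σ̃_B). Let x^obl_A, x^obl_B be the group-oblivious selection rates, i.e., x^obl_G = 1 − Φ((θ − μ_G)/σ̂_G) where θ is the unique real with p_A·x^obl_A + p_B·x^obl_B = α, and let x^opt_A, x^opt_B be the Bayesian-optimal selection rates, i.e., x^opt_G = 1 − Φ((θ̃ − μ_G)/σ̃_G) where θ̃ is the unique real with p_A·x^opt_A + p_B·x^opt_B = α. Then x^obl_A > x^obl_B if and only if α < 1/2, and x^opt_A < x^opt_B if and only if α < 1/2; that is, the group-oblivious algorithm overrepresents the high-variance group exactly for budgets below 1/2, while the Bayesian-optimal algorithm underrepresents it exactly for budgets below 1/2. -/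
import Mathlib

noncomputable def gpdf (t : ℝ) : ℝ := Real.exp (-t ^ 2 / 2) / Real.sqrt (2 * Real.pi)

noncomputable def gcdf (x : ℝ) : ℝ := ∫ t in Set.Iic x, gpdf t

open MeasureTheory

lemma gpdf_eq (t : ℝ) : gpdf t = (Real.sqrt (2 * Real.pi))⁻¹ • Real.exp (-(1/2) * t ^ 2) := by
  unfold gpdf; rw [smul_eq_mul]; ring_nf

lemma gpdf_pos (t : ℝ) : 0 < gpdf t := by
  unfold gpdf
  have := Real.pi_pos
  positivity

lemma integrable_gpdf : Integrable gpdf := by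
  have h : Integrable (fun t : ℝ => Real.exp (-(1/2) * t ^ 2)) :=
    integrable_exp_neg_mul_sq (by norm_num)
  exact (h.smul (Real.sqrt (2 * Real.pi))⁻¹).congr
    (Filter.Eventually.of_forall fun t => (gpdf_eq t).symm)

lemma gcdf_strictMono : StrictMono gcdf := by
  intro a b hab
  have hInt := integrable_gpdf
  have h1 : gcdf b - gcdf a = ∫ t in a..b, gpdf t :=
    intervalIntegral.integral_Iic_sub_Iic hInt.integrableOn hInt.integrableOn
  have h2 : 0 < ∫ t in a..b, gpdf t :=
    intervalIntegral.intervalIntegral_pos_of_pos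
      (hInt.intervalIntegrable) (fun x => gpdf_pos x) hab
  show gcdf a < gcdf b
  linarith

lemma integral_gpdf : ∫ t, gpdf t = 1 := by
  have h : ∫ t : ℝ, Real.exp (-(1/2) * t ^ 2) = Real.sqrt (Real.pi / (1/2)) :=
    integral_gaussian (1/2)
  have hs : Real.sqrt (Real.pi / (1/2)) = Real.sqrt (2 * Real.pi) := by ring_nf
  have hpos : (0:ℝ) < Real.sqrt (2 * Real.pi) := by
    have := Real.pi_pos; positivity
  calc ∫ t, gpdf t = ∫ t : ℝ, (Real.sqrt (2 * Real.pi))⁻¹ • Real.exp (-(1/2) * t ^ 2) := by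
        simp_rw [gpdf_eq]
    _ = (Real.sqrt (2 * Real.pi))⁻¹ • ∫ t : ℝ, Real.exp (-(1/2) * t ^ 2) := integral_smul _ _
    _ = 1 := by rw [h, hs, smul_eq_mul, inv_mul_cancel₀ hpos.ne']

lemma gcdf_zero : gcdf 0 = 1 / 2 := by
  have hInt := integrable_gpdf
  have heven : ∀ t : ℝ, gpdf (-t) = gpdf t := by
    intro t; unfold gpdf; rw [neg_pow]; ring_nf
  have h1 : gcdf 0 = ∫ t in Set.Ioi (0:ℝ), gpdf t := by
    unfold gcdf
    rw [show (0:ℝ) = -0 by norm_num, ← integral_comp_neg_Iic (0:ℝ) gpdf]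
    simp_rw [heven]
    norm_num
  have h2 : gcdf 0 + ∫ t in Set.Ioi (0:ℝ), gpdf t = 1 := by
    unfold gcdf
    rw [intervalIntegral.integral_Iic_add_Ioi hInt.integrableOn hInt.integrableOn, integral_gpdf]
  linarith

lemma key (p a s s' t : ℝ) (hp : p ∈ Set.Ioo (0:ℝ) 1) (hs' : 0 < s') (hss : s' < s)
    (hcon : p * (1 - gcdf (t / s)) + (1 - p) * (1 - gcdf (t / s')) = a) :
    (1 - gcdf (t / s') < 1 - gcdf (t / s) ↔ a < 1 / 2) := by
  obtain ⟨hp0, hp1⟩ := hp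
  have hs : 0 < s := lt_trans hs' hss
  have hdiv : t / s < t / s' ↔ 0 < t := by
    rw [div_lt_div_iff₀ hs hs']
    constructor
    · intro h; nlinarith
    · intro h; nlinarith
  have hmain : 1 - gcdf (t / s') < 1 - gcdf (t / s) ↔ 0 < t := by
    rw [sub_lt_sub_iff_left, gcdf_strictMono.lt_iff_lt, hdiv]
  rw [hmain]
  constructor
  · intro ht
    have h1 : gcdf 0 < gcdf (t / s) := gcdf_strictMono (by positivity)
    have h2 : gcdf 0 < gcdf (t / s') := gcdf_strictMono (by positivity)
    rw [gcdf_zero] at h1 h2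
    nlinarith
  · intro ha
    by_contra ht
    push_neg at ht
    rcases eq_or_lt_of_le ht with h | h
    · rw [h] at hcon
      simp only [zero_div, gcdf_zero] at hcon
      nlinarith
    · have hts : t / s < 0 := by exact div_neg_of_neg_of_pos h hs
      have hts' : t / s' < 0 := div_neg_of_neg_of_pos h hs'
      have h1 : gcdf (t / s) < gcdf 0 := gcdf_strictMono hts
      have h2 : gcdf (t / s') < gcdf 0 := gcdf_strictMono hts'
      rw [gcdf_zero] at h1 h2
      nlinarith

noncomputable def gquant : ℝ → ℝ := Function.invFun gcdf

noncomputable def sHat (η σ : ℝ) : ℝ := Real.sqrt (η ^ 2 + σ ^ 2)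

noncomputable def sTil (η σ : ℝ) : ℝ := η ^ 2 / sHat η σ

def Dset (pA α : ℝ) : Set ℝ :=
  {x | x ∈ Set.Ioo (0:ℝ) 1 ∧ (α - pA * x) / (1 - pA) ∈ Set.Ioo (0:ℝ) 1}

noncomputable def Qfun (pA α μA μB sA sB x : ℝ) : ℝ :=
  (1 / α) * (pA * (μA * x + sA * gpdf (gquant (1 - x)))
    + (1 - pA) * (μB * ((α - pA * x) / (1 - pA))
      + sB * gpdf (gquant (1 - (α - pA * x) / (1 - pA)))))

noncomputable def clampTo (lo hi x : ℝ) : ℝ := min hi (max lo x)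


/-- with no bias and a group-independent latent-quality
distribution, the group-oblivious algorithm overrepresents the high-variance
group exactly for `α < 1/2`, and the Bayesian-optimal algorithm underrepresents
it exactly for `α < 1/2`. -/
theorem stmt17 (pA α μ η σA σB θ θt : ℝ)
    (hpA : pA ∈ Set.Ioo (0:ℝ) 1) (hα : α ∈ Set.Ioo (0:ℝ) 1)
    (hη : 0 < η) (hσB : 0 < σB) (hσ : σB < σA)
    (hθ : pA * (1 - gcdf ((θ - μ) / sHat η σA))
        + (1 - pA) * (1 - gcdf ((θ - μ) / sHat η σB)) = α)
    (hθt : pA * (1 - gcdf ((θt - μ) / sTil η σA))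
        + (1 - pA) * (1 - gcdf ((θt - μ) / sTil η σB)) = α) :
    (1 - gcdf ((θ - μ) / sHat η σB) < 1 - gcdf ((θ - μ) / sHat η σA) ↔ α < 1 / 2)
    ∧ (1 - gcdf ((θt - μ) / sTil η σA) < 1 - gcdf ((θt - μ) / sTil η σB) ↔ α < 1 / 2) := by
  have hB0 : (0:ℝ) < η ^ 2 + σB ^ 2 := by positivity
  have hA0 : (0:ℝ) < η ^ 2 + σA ^ 2 := by positivity
  have hsB : 0 < sHat η σB := Real.sqrt_pos.mpr hB0
  have hsA : 0 < sHat η σA := Real.sqrt_pos.mpr hA0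
  have hBA : sHat η σB < sHat η σA :=
    Real.sqrt_lt_sqrt hB0.le (by nlinarith)
  have htA : 0 < sTil η σA := by unfold sTil; positivity
  have htAB : sTil η σA < sTil η σB := by
    unfold sTil
    exact div_lt_div_of_pos_left (by positivity) hsB hBA
  constructor
  · exact key pA α (sHat η σA) (sHat η σB) (θ - μ) hpA hsB hBA hθ
  · refine key (1 - pA) α (sTil η σB) (sTil η σA) (θt - μ)
      ⟨by linarith [hpA.2], by linarith [hpA.1]⟩ htA htAB ?_
    rw [show (1 - (1 - pA)) = pA by ring]
    linarith [hθt]
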